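/- arXiv:2503.21882 — 4 statements merged into one kernel-verified Lean document; each statement's English description precedes it below -/
import Mathlib

section
/- Let G be an infinite simple group and let n ≥ 2. Then the action of Aut_G(G ∗ F_n) on Hom_G(G ∗ F_n, G) by precomposition is highly transitive: for every k ≥ 1 and any two injective k-tuples (φ_1, …, φ_k) and (ψ_1, …, ψ_k) of elements of Hom_G(G ∗ F_n, G), there is a G-automorphism α of G ∗ F_n with φ_i ∘ α = ψ_i for all i. -/
/-- The subgroup `Aut_G(G ∗ F_n)` of `G`-automorphisms of `G ∗ F_n`, i.e.
automorphisms restricting to the identity on (the canonical copy of) `G`. -/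
def gAut (G : Type*) [Group G] (n : ℕ) :
    Subgroup (MulAut (Monoid.Coprod G (FreeGroup (Fin n)))) where
  carrier := {α | ∀ g : G, α (Monoid.Coprod.inl g) = Monoid.Coprod.inl g}
  one_mem' := fun _ => rfl
  mul_mem' := fun {a b} ha hb g => by
    simp only [Set.mem_setOf_eq] at ha hb
    show a (b _) = _
    rw [hb g, ha g]
  inv_mem' := fun {a} ha g => by
    simp only [Set.mem_setOf_eq] at ha
    show a⁻¹ _ = _
    conv_lhs => rw [← ha g]
    exact a.symm_apply_apply _

/-- The set `Hom_G(G ∗ F_n, G)` of `G`-homomorphisms `G ∗ F_n → G`, i.e.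
homomorphisms restricting to the identity on `G`. -/
def GHom (G : Type*) [Group G] (n : ℕ) :=
  {φ : Monoid.Coprod G (FreeGroup (Fin n)) →* G // ∀ g : G, φ (Monoid.Coprod.inl g) = g}

/-!
Identify a `G`-homomorphism `G ∗ F_n → G` with the tuple in `G^n` of its values at the
generators `x_1, …, x_n`.
The transvection `x_i ↦ x_i · w`, with `w` not involving `x_i`, multiplies the `i`-th entry of
each tuple by the value of `w` at that tuple. For finitely many tuples, these values form a
subgroup of `G^k` containing the diagonal, and since `G` is simple with trivial centre, a
commutator argument shows that it contains every family constant on the tuples that agree off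
the `i`-th entry. As `G` is infinite, one such move makes one entry injective across the
family; the other entries can then be changed one at a time, bringing every injective family
to the normal form `(c_s, 1, …, 1)` for a fixed injective `c`.
-/

theorem IsSimpleGroup.center_eq_bot_of_infinite (G : Type*) [Group G] [IsSimpleGroup G]
    [Infinite G] : Subgroup.center G = ⊥ := by
  refine (Subgroup.center G).normal_of_characteristic.eq_bot_or_eq_top.resolve_right fun h => ?_
  let _ : CommGroup G :=
    { mul_comm := fun a b => (Subgroup.mem_center_iff.mp (h ▸ Subgroup.mem_top b) a) }
  have := CommGroup.is_simple_iff_prime_card.mp ‹IsSimpleGroup G›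
  exact Nat.not_prime_zero (Nat.card_eq_zero_of_infinite (α := G) ▸ this)

open scoped commutatorElement

namespace Subgroup

variable {G ι : Type*} [Group G]

def evalOnVanishing (H : Subgroup (ι → G)) (T : Set ι) (j : ι) : Subgroup G :=
  (H ⊓ ⨅ i ∈ T, (Pi.evalMonoidHom (fun _ => G) i).ker).map (Pi.evalMonoidHom _ j)

theorem mem_evalOnVanishing {H : Subgroup (ι → G)} {T : Set ι} {j : ι} {g : G} :
    g ∈ H.evalOnVanishing T j ↔ ∃ h ∈ H, (∀ i ∈ T, h i = 1) ∧ h j = g := by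
  simp [evalOnVanishing, and_assoc]

theorem evalOnVanishing_normal {H : Subgroup (ι → G)}
    (hdiag : ∀ g : G, Function.const ι g ∈ H) (T : Set ι) (j : ι) :
    (H.evalOnVanishing T j).Normal := by
  refine ⟨fun x hx g => ?_⟩
  obtain ⟨h, hH, hT, rfl⟩ := mem_evalOnVanishing.mp hx
  refine mem_evalOnVanishing.mpr
    ⟨Function.const ι g * h * Function.const ι g⁻¹,
      mul_mem (mul_mem (hdiag g) hH) (hdiag g⁻¹), fun i hi => ?_, rfl⟩
  simp [hT i hi]

variable [IsSimpleGroup G]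

theorem evalOnVanishing_eq_top (hZ : center G = ⊥) {H : Subgroup (ι → G)}
    (hdiag : ∀ g : G, Function.const ι g ∈ H) {j : ι} (T : Finset ι)
    (hT : ∀ i ∈ T, ∃ h ∈ H, h i ≠ h j) : H.evalOnVanishing T j = ⊤ := by
  classical
  induction T using Finset.induction_on with
  | empty =>
    exact eq_top_iff.mpr fun g _ =>
      mem_evalOnVanishing.mpr ⟨Function.const ι g, hdiag g, by simp, rfl⟩
  | insert i T _ ih =>
    obtain ⟨h, hH, hij⟩ := hT i (T.mem_insert_self i)
    have hu : (h i)⁻¹ * h j ∉ center G := by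
      rw [hZ, mem_bot, inv_mul_eq_one]
      exact hij
    obtain ⟨y, hy⟩ := not_forall.mp (mt mem_center_iff.mpr hu)
    obtain ⟨h', hH', hT', rfl⟩ := mem_evalOnVanishing.mp
      ((ih fun i' hi' => hT i' (Finset.mem_insert_of_mem hi')).symm ▸ mem_top y)
    -- `h` normalised to vanish at `i`, commuted with `h'`, vanishes on `insert i T` but not at `j`
    have hmem : ⁅(h i)⁻¹ * h j, h' j⁆ ∈ H.evalOnVanishing (insert i T : Finset ι) j := by
      refine mem_evalOnVanishing.mpr ⟨⁅(Function.const ι (h i))⁻¹ * h, h'⁆,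
        ?_, fun l hl => ?_, rfl⟩
      · have ha := mul_mem (inv_mem (hdiag (h i))) hH
        simpa only [commutatorElement_def] using
          mul_mem (mul_mem (mul_mem ha hH') (inv_mem ha)) (inv_mem hH')
      · rcases Finset.mem_insert.mp hl with rfl | hl
        · simp [commutatorElement_def]
        · simp [commutatorElement_def, hT' l hl]
    refine ((evalOnVanishing_normal hdiag _ j).eq_bot_or_eq_top).resolve_left fun hbot => hy ?_
    rw [hbot, mem_bot, commutatorElement_eq_one_iff_mul_comm] at hmem
    exact hmem.symm

theorem mem_of_const_mem_of_forall_eq [Finite ι] (hZ : center G = ⊥) {H : Subgroup (ι → G)}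
    (hdiag : ∀ g : G, Function.const ι g ∈ H) {t : ι → G}
    (ht : ∀ i j, (∀ h ∈ H, h i = h j) → t i = t j) : t ∈ H := by
  classical
  have : Fintype ι := Fintype.ofFinite ι
  suffices ∀ S : Finset ι, ∃ a ∈ H, ∀ i ∈ S, a i = t i by
    obtain ⟨a, ha, hat⟩ := this Finset.univ
    exact funext (fun i => hat i (Finset.mem_univ i)) ▸ ha
  intro S
  induction S using Finset.induction_on with
  | empty => exact ⟨1, one_mem H, by simp⟩
  | insert j S _ ih =>
    obtain ⟨a, ha, hat⟩ := ih
    by_cases hsep : ∃ i ∈ S, ∀ h ∈ H, h i = h j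
    · obtain ⟨i, hi, hij⟩ := hsep
      refine ⟨a, ha, (Finset.forall_mem_insert _ _ _).mpr ⟨?_, hat⟩⟩
      rw [← hij a ha, hat i hi, ht i j hij]
    · push Not at hsep
      obtain ⟨b, hb, hbS, hbj⟩ := mem_evalOnVanishing.mp
        ((evalOnVanishing_eq_top hZ hdiag S hsep).symm ▸ mem_top ((a j)⁻¹ * t j))
      refine ⟨a * b, mul_mem ha hb,
        (Finset.forall_mem_insert _ _ _).mpr ⟨?_, fun i hi => ?_⟩⟩
      · simp [hbj]
      · simp [hbS i hi, hat i hi]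

end Subgroup

theorem exists_injective_mul_comp {G α β : Type*} [Group G] [Infinite G] [Finite α]
    (b : α → G) (κ : α → β) (hb : ∀ s t, κ s = κ t → b s = b t → s = t) :
    ∃ d : β → G, Function.Injective fun s => b s * d (κ s) := by
  classical
  suffices ∀ T : Set β, T.Finite →
      ∃ d : β → G, Set.InjOn (fun s => b s * d (κ s)) (κ ⁻¹' T) by
    obtain ⟨d, hd⟩ := this _ (Set.finite_range κ)
    exact ⟨d, Set.injOn_univ.mp (by simpa using hd)⟩
  intro T hT
  induction T, hT using Set.Finite.induction_on with
  | empty => exact ⟨1, by simp⟩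
  | @insert x T hx _ ih =>
    obtain ⟨d, hd⟩ := ih
    obtain ⟨g, hg⟩ :=
      (Set.range fun p : α × α => (b p.1)⁻¹ * (b p.2 * d (κ p.2))).toFinite.exists_notMem
    have hd' : ∀ s, κ s ∈ T → Function.update d x g (κ s) = d (κ s) := fun s hs =>
      Function.update_of_ne (ne_of_mem_of_not_mem hs hx) _ _
    -- `g` avoids the finitely many values that would collide with the old fibres
    have hnew : ∀ s t, κ s = x → κ t ∈ T →
        b s * Function.update d x g (κ s) ≠ b t * Function.update d x g (κ t) := by
      intro s t hs ht hst
      rw [hs, Function.update_self, hd' t ht] at hst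
      exact hg ⟨(s, t), by simp [← hst]⟩
    refine ⟨Function.update d x g, fun s hs t ht hst => ?_⟩
    dsimp only at hst
    rcases hs with hs | hs <;> rcases ht with ht | ht
    · rw [hs, ← ht, Function.update_self] at hst
      exact hb s t (hs.trans ht.symm) (mul_right_cancel hst)
    · exact absurd hst (hnew s t hs ht)
    · exact absurd hst.symm (hnew t s ht hs)
    · simp only [hd' s hs, hd' t ht] at hst
      exact hd hs ht hst

open Monoid

section Substitution

variable {G : Type*} [Group G] {n : ℕ}

def evalHom (f : Fin n → G) : Coprod G (FreeGroup (Fin n)) →* G :=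
  Coprod.lift (MonoidHom.id G) (FreeGroup.lift f)

@[simp] theorem evalHom_inl (f : Fin n → G) (g : G) : evalHom f (Coprod.inl g) = g := by
  simp [evalHom]

@[simp] theorem evalHom_inr_of (f : Fin n → G) (l : Fin n) :
    evalHom f (Coprod.inr (FreeGroup.of l)) = f l := by
  simp [evalHom]

def substGen (i : Fin n) (v : Coprod G (FreeGroup (Fin n))) :
    Coprod G (FreeGroup (Fin n)) →* Coprod G (FreeGroup (Fin n)) :=
  Coprod.lift Coprod.inl (FreeGroup.lift (Function.update (Coprod.inr ∘ FreeGroup.of) i v))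

@[simp] theorem substGen_inl (i : Fin n) (v : Coprod G (FreeGroup (Fin n))) (g : G) :
    substGen i v (Coprod.inl g) = Coprod.inl g := by
  simp [substGen]

theorem evalHom_comp_substGen (f : Fin n → G) (i : Fin n)
    (v : Coprod G (FreeGroup (Fin n))) :
    (evalHom f).comp (substGen i v) = evalHom (Function.update f i (evalHom f v)) := by
  refine Coprod.hom_ext (MonoidHom.ext fun g => by simp) (FreeGroup.ext_hom _ _ fun l => ?_)
  simp [substGen, Function.apply_update (fun _ => evalHom f)]

theorem substGen_comp_substGen (i : Fin n) (v w : Coprod G (FreeGroup (Fin n))) :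
    (substGen i v).comp (substGen i w) = substGen i (substGen i v w) := by
  refine Coprod.hom_ext (MonoidHom.ext fun g => by simp) (FreeGroup.ext_hom _ _ fun l => ?_)
  rcases eq_or_ne l i with rfl | hl <;> simp [substGen, *]

theorem substGen_of_self (i : Fin n) :
    substGen i (Coprod.inr (FreeGroup.of i)) = MonoidHom.id (Coprod G (FreeGroup (Fin n))) := by
  refine Coprod.hom_ext (MonoidHom.ext fun g => by simp) (FreeGroup.ext_hom _ _ fun l => ?_)
  rcases eq_or_ne l i with rfl | hl <;> simp [substGen, *]

/-- The transvection `x_i ↦ x_i · w'`, where `w'` is `w` with `x_i` deleted. -/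
def transvection (i : Fin n) (w : Coprod G (FreeGroup (Fin n))) :
    Coprod G (FreeGroup (Fin n)) →* Coprod G (FreeGroup (Fin n)) :=
  substGen i (Coprod.inr (FreeGroup.of i) * substGen i 1 w)

theorem transvection_comp_transvection_inv (i : Fin n) (w : Coprod G (FreeGroup (Fin n))) :
    (transvection i w).comp (transvection i w⁻¹) = MonoidHom.id _ := by
  have hkill : transvection i w (substGen i 1 w⁻¹) = (substGen i 1 w)⁻¹ := by
    rw [← MonoidHom.comp_apply, transvection, substGen_comp_substGen, map_one, map_inv]
  rw [transvection, transvection, substGen_comp_substGen, ← transvection, map_mul, hkill]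
  simpa [transvection, substGen] using substGen_of_self (G := G) i

def transvectionEquiv (i : Fin n) (w : Coprod G (FreeGroup (Fin n))) :
    MulAut (Coprod G (FreeGroup (Fin n))) :=
  (transvection i w).toMulEquiv (transvection i w⁻¹)
    (by simpa using transvection_comp_transvection_inv i w⁻¹)
    (transvection_comp_transvection_inv i w)

theorem transvectionEquiv_mem_gAut (i : Fin n) (w : Coprod G (FreeGroup (Fin n))) :
    transvectionEquiv i w ∈ gAut G n := fun g =>
  substGen_inl i (Coprod.inr (FreeGroup.of i) * substGen i 1 w) g

theorem evalHom_comp_transvectionEquiv (f : Fin n → G) (i : Fin n)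
    (w : Coprod G (FreeGroup (Fin n))) :
    (evalHom f).comp (transvectionEquiv i w).toMonoidHom
      = evalHom (Function.update f i (f i * evalHom (Function.update f i 1) w)) := by
  have : (evalHom f).comp (transvection i w) = _ := evalHom_comp_substGen f i _
  rw [map_mul, evalHom_inr_of, ← MonoidHom.comp_apply, evalHom_comp_substGen, map_one] at this
  exact this

end Substitution

section Orbits

variable {G ι : Type*} [Group G] {n : ℕ}

def GAutRel (φ ψ : ι → (Coprod G (FreeGroup (Fin n)) →* G)) : Prop :=
  ∃ α ∈ gAut G n, ∀ s, (φ s).comp α.toMonoidHom = ψ s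

namespace GAutRel

theorem refl (φ : ι → (Coprod G (FreeGroup (Fin n)) →* G)) : GAutRel φ φ :=
  ⟨1, one_mem _, fun _ => rfl⟩

theorem symm {φ ψ : ι → (Coprod G (FreeGroup (Fin n)) →* G)} (h : GAutRel φ ψ) :
    GAutRel ψ φ := by
  obtain ⟨α, hα, h⟩ := h
  refine ⟨α⁻¹, inv_mem hα, fun s => MonoidHom.ext fun x => ?_⟩
  simp [← h s]

theorem trans {φ ψ χ : ι → (Coprod G (FreeGroup (Fin n)) →* G)} (h₁ : GAutRel φ ψ)
    (h₂ : GAutRel ψ χ) : GAutRel φ χ := by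
  obtain ⟨α, hα, h₁⟩ := h₁
  obtain ⟨β, hβ, h₂⟩ := h₂
  exact ⟨α * β, mul_mem hα hβ, fun s => by rw [← h₂ s, ← h₁ s]; rfl⟩

end GAutRel

variable [IsSimpleGroup G] [Finite ι]

theorem gAutRel_update_mul (hZ : Subgroup.center G = ⊥) (P : ι → Fin n → G) (i : Fin n)
    (d : ι → G)
    (hd : ∀ s t, Function.update (P s) i 1 = Function.update (P t) i 1 → d s = d t) :
    GAutRel (fun s => evalHom (P s))
      fun s => evalHom (Function.update (P s) i (P s i * d s)) := by
  let E : Coprod G (FreeGroup (Fin n)) →* (ι → G) :=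
    MonoidHom.pi fun s => evalHom (Function.update (P s) i 1)
  have hd : d ∈ E.range := by
    refine Subgroup.mem_of_const_mem_of_forall_eq hZ
      (fun g => E.mem_range.mpr ⟨Coprod.inl g, by ext; simp [E]⟩)
      fun s t hst => hd s t (funext fun l => ?_)
    simpa [E] using hst _ ⟨Coprod.inr (FreeGroup.of l), rfl⟩
  obtain ⟨w, hw⟩ := hd
  refine ⟨transvectionEquiv i w, transvectionEquiv_mem_gAut i w, fun s => ?_⟩
  simp only [evalHom_comp_transvectionEquiv, ← hw]
  rfl

theorem gAutRel_of_injective_apply (hZ : Subgroup.center G = ⊥) {P Q : ι → Fin n → G}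
    {j : Fin n} (hinj : Function.Injective fun s => P s j) (heq : ∀ s, P s j = Q s j) :
    GAutRel (fun s => evalHom (P s)) fun s => evalHom (Q s) := by
  classical
  suffices ∀ S : Finset (Fin n),
      GAutRel (fun s => evalHom (P s)) fun s => evalHom (S.piecewise (Q s) (P s)) by
    simpa using this Finset.univ
  intro S
  induction S using Finset.induction_on with
  | empty => simpa using GAutRel.refl _
  | insert a S _ ih =>
    set R := fun s => S.piecewise (Q s) (P s)
    have hRj : ∀ s, R s j = P s j := fun s => by by_cases hj : j ∈ S <;> simp [R, hj, heq]
    have hd : ∀ s t, Function.update (R s) a 1 = Function.update (R t) a 1 →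
        (R s a)⁻¹ * Q s a = (R t a)⁻¹ * Q t a := by
      intro s t hst
      rcases eq_or_ne a j with rfl | haj
      · simp [hRj, heq]
      · have := congrFun hst j
        rw [Function.update_of_ne haj.symm, Function.update_of_ne haj.symm, hRj, hRj] at this
        rw [hinj this]
    refine ih.trans ?_
    convert gAutRel_update_mul hZ R a _ hd using 3 with s
    rw [Finset.piecewise_insert, mul_inv_cancel_left]

variable [Infinite G]

theorem exists_gAutRel_injective_apply {P : ι → Fin n → G} (hP : Function.Injective P)
    (j : Fin n) : ∃ Q : ι → Fin n → G,
      (GAutRel (fun s => evalHom (P s)) fun s => evalHom (Q s)) ∧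
        Function.Injective fun s => Q s j := by
  obtain ⟨d, hd⟩ :=
    exists_injective_mul_comp (fun s => P s j) (fun s => Function.update (P s) j 1)
    fun s t hkey hj => hP <| funext fun l => by
      rcases eq_or_ne l j with rfl | hl
      · exact hj
      · simpa [hl] using congrFun hkey l
  refine ⟨fun s => Function.update (P s) j (P s j * d (Function.update (P s) j 1)),
    gAutRel_update_mul (IsSimpleGroup.center_eq_bot_of_infinite G) P j _
      fun s t hst => by rw [hst], ?_⟩
  simpa using hd

theorem gAutRel_mulSingle {i j : Fin n} (hij : i ≠ j) {P : ι → Fin n → G}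
    (hP : Function.Injective P) {c : ι → G} (hc : Function.Injective c) :
    GAutRel (fun s => evalHom (P s)) fun s => evalHom (Pi.mulSingle i (c s)) := by
  have hZ := IsSimpleGroup.center_eq_bot_of_infinite G
  obtain ⟨Q, hPQ, hQ⟩ := exists_gAutRel_injective_apply hP j
  let T : ι → Fin n → G := fun s => Function.update (Pi.mulSingle i (c s)) j (Q s j)
  have hTi : ∀ s, T s i = c s := fun s => by simp [T, hij]
  have hQT := gAutRel_of_injective_apply hZ (Q := T) hQ fun s => by simp [T]
  have hT := gAutRel_of_injective_apply hZ (P := T) (Q := fun s => Pi.mulSingle i (c s))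
    (j := i) (by simpa only [hTi] using hc) fun s => by simp [hTi]
  exact hPQ.trans (hQT.trans hT)

end Orbits

namespace GHom

variable {G : Type*} [Group G] {n : ℕ}

def gens (φ : GHom G n) : Fin n → G := fun l => φ.1 (Coprod.inr (FreeGroup.of l))

theorem evalHom_gens (φ : GHom G n) : evalHom φ.gens = φ.1 :=
  Coprod.hom_ext (MonoidHom.ext fun g => by simp [φ.2 g])
    (FreeGroup.ext_hom _ _ fun l => by simp [gens])

theorem gens_injective : Function.Injective (gens : GHom G n → Fin n → G) := fun φ ψ h =>
  Subtype.ext <| by rw [← evalHom_gens φ, ← evalHom_gens ψ, h]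

end GHom

theorem gAut_action_highly_transitive_general (G : Type*) [Group G] [Infinite G]
    (hsimple : IsSimpleGroup G) (n : ℕ) (hn : 2 ≤ n)
    (k : ℕ) (φ ψ : Fin k → GHom G n)
    (hφ : Function.Injective φ) (hψ : Function.Injective ψ) :
    ∃ α ∈ gAut G n, ∀ i : Fin k, (φ i).1.comp α.toMonoidHom = (ψ i).1 := by
  have hij : (⟨0, by omega⟩ : Fin n) ≠ ⟨1, by omega⟩ := by simp
  let c : Fin k ↪ G := Fin.valEmbedding.trans (Infinite.natEmbedding G)
  have toCanonical : ∀ χ : Fin k → GHom G n, Function.Injective χ →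
      GAutRel (fun s => (χ s).1) fun s => evalHom (Pi.mulSingle ⟨0, by omega⟩ (c s)) := by
    intro χ hχ
    simpa only [Function.comp_apply, GHom.evalHom_gens] using
      gAutRel_mulSingle hij (GHom.gens_injective.comp hχ) c.injective
  exact (toCanonical φ hφ).trans (toCanonical ψ hψ).symm

/-- For `G` an infinite simple group and `n ≥ 2`, the action of `Aut_G(G ∗ F_n)` on
`Hom_G(G ∗ F_n, G)` by precomposition is highly transitive: for every `k ≥ 1` and
any two injective `k`-tuples `(φ_1, …, φ_k)` and `(ψ_1, …, ψ_k)` of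
`G`-homomorphisms, there is a `G`-automorphism `α` with `φ_i ∘ α = ψ_i` for all
`i`. -/
theorem gAut_action_highly_transitive (G : Type*) [Group G] [Infinite G]
    (hsimple : IsSimpleGroup G) (n : ℕ) (hn : 2 ≤ n)
    (k : ℕ) (hk : 1 ≤ k) (φ ψ : Fin k → GHom G n)
    (hφ : Function.Injective φ) (hψ : Function.Injective ψ) :
    ∃ α ∈ gAut G n, ∀ i : Fin k, (φ i).1.comp α.toMonoidHom = (ψ i).1 :=
  gAut_action_highly_transitive_general G hsimple n hn k φ ψ hφ hψ
end

section
/- Let G be a nonabelian simple group, let T ⊆ G be a finite subset, and let g ∈ G with g ∉ T. Then there exists an element w of G ∗ F_1 such that ev_t(w) = 1 for every t ∈ T and ev_g(w) ≠ 1, where for h ∈ G, ev_h : G ∗ F_1 → G denotes the unique G-homomorphism sending the generator x of F_1 to h. (Such a w is said to separate T from g.) -/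
/-!
A word `w` vanishing at every `s ∈ S` but not at `g` is upgraded to one that also vanishes at a
new point `t ≠ g` by taking the commutator of a conjugate `c w c⁻¹` with `x t⁻¹`: the latter
vanishes at `t`, and at `g` the commutator is `⁅c a c⁻¹, g t⁻¹⁆` with `a = ev_g(w) ≠ 1`. In a
nonabelian simple group the conjugates of `a ≠ 1` generate everything and the centre is trivial,
so some conjugate of `a` fails to commute with `g t⁻¹ ≠ 1`. Induction on `T` finishes the proof.
-/

open scoped commutatorElement

open Monoid.Coprod Subgroup

/-- For `h ∈ G`, the unique `G`-homomorphism `ev_h : G ∗ F_1 → G` sending the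
generator `x` of `F_1` to `h` (and restricting to the identity on `G`). -/
def evAt (G : Type*) [Group G] (h : G) :
    Monoid.Coprod G (FreeGroup Unit) →* G :=
  Monoid.Coprod.lift (MonoidHom.id G) (FreeGroup.lift fun _ => h)

theorem Subgroup.exists_commutatorElement_conj_ne_one {G : Type*} [Group G] {a b : G}
    (ha : normalClosure {a} = ⊤) (hb : b ∉ center G) : ∃ c : G, ⁅c * a * c⁻¹, b⁆ ≠ 1 := by
  by_contra! h
  refine hb (Set.singleton_subset_iff.mp (centralizer_eq_top_iff_subset.mp ?_))
  rw [eq_top_iff, ← ha, normalClosure, closure_le]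
  intro x hx
  obtain ⟨_, rfl, hconj⟩ := Group.mem_conjugatesOfSet_iff.mp hx
  obtain ⟨c, rfl⟩ := isConj_iff.mp hconj
  rintro _ rfl
  exact (commutatorElement_eq_one_iff_commute.mp (h c)).symm.eq

namespace IsSimpleGroup

variable {G : Type*} [Group G] [IsSimpleGroup G]

theorem normalClosure_singleton_eq_top {a : G} (ha : a ≠ 1) : normalClosure {a} = ⊤ :=
  normalClosure_normal.eq_bot_or_eq_top.resolve_left
    fun h => ha (by simpa using normalClosure_eq_bot_iff.mp h)

theorem center_eq_bot (hna : ∃ a b : G, a * b ≠ b * a) : center G = ⊥ := by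
  refine (center G).normal_of_characteristic.eq_bot_or_eq_top.resolve_right fun h => ?_
  obtain ⟨a, b, hab⟩ := hna
  exact hab (mem_center_iff.mp (h ▸ mem_top a) b).symm

end IsSimpleGroup

section Separates

variable {G : Type*} [Group G]

@[simp] lemma evAt_inl (h a : G) : evAt G h (inl a) = a := by
  simp [evAt]

@[simp] lemma evAt_inr_of (h : G) : evAt G h (inr (FreeGroup.of ())) = h := by
  simp [evAt]

def Separates (T : Finset G) (g : G) (w : Monoid.Coprod G (FreeGroup Unit)) : Prop :=
  (∀ t ∈ T, evAt G t w = 1) ∧ evAt G g w ≠ 1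

theorem exists_separates_empty [Nontrivial G] (g : G) : ∃ w, Separates ∅ g w := by
  obtain ⟨a, ha⟩ := exists_ne (1 : G)
  exact ⟨inl a, by simp, by simpa using ha⟩

theorem Separates.exists_insert [DecidableEq G] [IsSimpleGroup G] (hcenter : center G = ⊥) {S : Finset G}
    {g t : G} {w : Monoid.Coprod G (FreeGroup Unit)} (hw : Separates S g w) (hgt : g ≠ t) :
    ∃ w', Separates (insert t S) g w' := by
  have hgt' : g * t⁻¹ ∉ center G := by
    rw [hcenter, mem_bot, mul_inv_eq_one]
    exact hgt
  obtain ⟨c, hc⟩ := exists_commutatorElement_conj_ne_one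
    (IsSimpleGroup.normalClosure_singleton_eq_top hw.2) hgt'
  have hev (h : G) : evAt G h ⁅inl c * w * (inl c)⁻¹, inr (FreeGroup.of ()) * inl t⁻¹⁆ =
      ⁅c * evAt G h w * c⁻¹, h * t⁻¹⁆ := by
    simp [map_commutatorElement]
  refine ⟨_, fun s hs => ?_, by rwa [hev]⟩
  rw [hev]
  rcases Finset.mem_insert.mp hs with rfl | hs
  · rw [mul_inv_cancel, commutatorElement_one_right]
  · rw [hw.1 s hs, mul_one, mul_inv_cancel, commutatorElement_one_left]

end Separates

/-- For `G` a nonabelian simple group, any finite subset `T ⊆ G` can be separated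
from any `g ∈ G \ T`: there is `w ∈ G ∗ F_1` with `ev_t(w) = 1` for all `t ∈ T`
and `ev_g(w) ≠ 1`. -/
theorem separating_word_exists (G : Type*) [Group G]
    (hsimple : IsSimpleGroup G) (hna : ∃ a b : G, a * b ≠ b * a)
    (T : Finset G) (g : G) (hg : g ∉ T) :
    ∃ w : Monoid.Coprod G (FreeGroup Unit),
      (∀ t ∈ T, evAt G t w = 1) ∧ evAt G g w ≠ 1 := by
  classical
  have hcenter := IsSimpleGroup.center_eq_bot hna
  induction T using Finset.induction_on with
  | empty => exact exists_separates_empty g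
  | insert t S _ ih =>
    obtain ⟨w, hw⟩ := ih fun h => hg (Finset.mem_insert_of_mem h)
    exact Separates.exists_insert hcenter hw fun h => hg (h ▸ Finset.mem_insert_self t S)
end

section
/- Let G be a group and n ≥ 2. For g ∈ G, let α_g be the G-automorphism of G ∗ F_n fixing x_2, …, x_n and sending x_1 to x_1 · inl(g), and let β_g be the G-automorphism fixing x_2, …, x_n and sending x_1 to x_1 · (x_2⁻¹ · inl(g) · x_2). Then the homomorphism G ∗ G → Aut_G(G ∗ F_n) induced by g ↦ α_g on the first free factor and g ↦ β_g on the second free factor is injective; in particular the free product G ∗ G embeds in Aut_G(G ∗ F_n). -/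
/-- The generator `x_i` of the free factor `F_n` inside `G ∗ F_n`. -/
def xgen (G : Type*) [Group G] (n : ℕ) (i : Fin n) :
    Monoid.Coprod G (FreeGroup (Fin n)) :=
  Monoid.Coprod.inr (FreeGroup.of i)

/-!
Send `w ∈ G ∗ G` to the transvection `x_1 ↦ x_1 · φ(w)`, where `φ : G ∗ G → G ∗ F_n` is `inl` on
the first factor and `x_2⁻¹ · inl(-) · x_2` on the second. Since the image of `φ` lies in
`⟨G, x_2⟩`, which every transvection of `x_1` fixes, these transvections compose like `φ`, giving
a homomorphism `G ∗ G → Aut_G(G ∗ F_n)`; its kernel is that of `φ`, read off at `x_1`.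
Finally `φ` is injective: letting `G` act on `G ∗ G` by left multiplication and `x_2` by swapping
the factors pulls back along `φ` to the left regular action of `G ∗ G`.
-/

open Monoid Monoid.Coprod

namespace FreeProductAut

variable {G : Type*} [Group G] {ι : Type*}

def coprodConj (j : ι) : G ∗ G →* G ∗ FreeGroup ι :=
  lift inl ((MulAut.conj (inr (.of j))⁻¹).toMonoidHom.comp inl)

@[simp]
lemma coprodConj_inl (j : ι) (g : G) : coprodConj j (inl g) = inl g :=
  lift_apply_inl _ _ _

lemma coprodConj_inr (j : ι) (g : G) :
    coprodConj j (inr g) = (inr (.of j))⁻¹ * inl g * inr (.of j) := by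
  simp [coprodConj]

variable [DecidableEq ι]

def swapAction (j : ι) : G ∗ FreeGroup ι →* Equiv.Perm (G ∗ G) :=
  lift ((MulAction.toPermHom (G ∗ G) (G ∗ G)).comp (inl : G →* G ∗ G))
    (FreeGroup.lift (Pi.mulSingle j (MulEquiv.coprodComm G G).toEquiv))

lemma swapAction_comp_coprodConj (j : ι) :
    (swapAction j).comp (coprodConj j) = MulAction.toPermHom (G ∗ G) (G ∗ G) := by
  refine hom_ext (MonoidHom.ext fun g ↦ ?_) (MonoidHom.ext fun g ↦ Equiv.ext fun w ↦ ?_)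
  · simp [swapAction]
  · simp [swapAction, coprodConj_inr]

lemma coprodConj_injective (j : ι) : Function.Injective (coprodConj (G := G) j) :=
  .of_comp (f := swapAction j) <| by
    rw [← MonoidHom.coe_comp, swapAction_comp_coprodConj]
    exact MulAction.toPerm_injective

def transvection (i : ι) (k : G ∗ FreeGroup ι) : G ∗ FreeGroup ι →* G ∗ FreeGroup ι :=
  lift inl (FreeGroup.lift (Function.update (fun j ↦ inr (.of j)) i (inr (.of i) * k)))

@[simp]
lemma transvection_inl (i : ι) (k : G ∗ FreeGroup ι) (g : G) :
    transvection i k (inl g) = inl g :=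
  lift_apply_inl _ _ _

lemma transvection_of_self (i : ι) (k : G ∗ FreeGroup ι) :
    transvection i k (inr (.of i)) = inr (.of i) * k := by
  simp [transvection]

lemma transvection_of_of_ne {i j : ι} (h : j ≠ i) (k : G ∗ FreeGroup ι) :
    transvection i k (inr (.of j)) = inr (.of j) := by
  simp [transvection, Function.update_of_ne h]

lemma transvection_one (i : ι) : transvection (G := G) i 1 = .id _ := by
  refine hom_ext (MonoidHom.ext fun g ↦ transvection_inl i 1 g) (FreeGroup.ext_hom _ _ fun j ↦ ?_)
  obtain rfl | h := eq_or_ne j i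
  · exact (transvection_of_self j 1).trans (mul_one _)
  · exact transvection_of_of_ne h 1

lemma transvection_comp {i : ι} {k k' : G ∗ FreeGroup ι} (h : transvection i k k' = k') :
    (transvection i k).comp (transvection i k') = transvection i (k * k') := by
  refine hom_ext (MonoidHom.ext fun g ↦ by simp) (FreeGroup.ext_hom _ _ fun j ↦ ?_)
  obtain rfl | hj := eq_or_ne j i
  · simp [transvection_of_self, h, mul_assoc]
  · simp [transvection_of_of_ne hj]

lemma transvection_coprodConj {i j : ι} (h : j ≠ i) (k : G ∗ FreeGroup ι) (w : G ∗ G) :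
    transvection i k (coprodConj j w) = coprodConj j w := by
  suffices (transvection i k).comp (coprodConj j) = coprodConj j from DFunLike.congr_fun this w
  refine hom_ext (MonoidHom.ext fun g ↦ by simp) (MonoidHom.ext fun g ↦ ?_)
  simp [coprodConj_inr, transvection_of_of_ne h]

section Hom

variable {M : Type*} [Group M] (i : ι) (c : M →* G ∗ FreeGroup ι)
  (hc : ∀ m m', transvection i (c m) (c m') = c m')

def transvectionHom : M →* MulAut (G ∗ FreeGroup ι) where
  toFun m := (transvection i (c m)).toMulEquiv (transvection i (c m⁻¹))
    (by rw [transvection_comp (hc _ _), ← map_mul, inv_mul_cancel, map_one, transvection_one])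
    (by rw [transvection_comp (hc _ _), ← map_mul, mul_inv_cancel, map_one, transvection_one])
  map_one' := MulEquiv.ext fun x ↦ by simp [transvection_one]
  map_mul' m m' := MulEquiv.ext fun x ↦ by
    simp [← transvection_comp (hc m m')]

lemma transvectionHom_apply_inl (m : M) (g : G) : transvectionHom i c hc m (inl g) = inl g :=
  transvection_inl i (c m) g

lemma transvectionHom_apply_of_self (m : M) :
    transvectionHom i c hc m (inr (.of i)) = inr (.of i) * c m :=
  transvection_of_self i (c m)

lemma transvectionHom_apply_of_of_ne {j : ι} (h : j ≠ i) (m : M) :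
    transvectionHom i c hc m (inr (.of j)) = inr (.of j) :=
  transvection_of_of_ne h (c m)

lemma transvectionHom_injective (hinj : Function.Injective c) :
    Function.Injective (transvectionHom i c hc) := by
  refine (injective_iff_map_eq_one _).2 fun m hm ↦ hinj ?_
  have hx := congrArg (· (inr (.of i))) hm
  simp only [transvectionHom_apply_of_self, MulAut.one_apply] at hx
  rw [map_one, mul_eq_left.1 hx]

end Hom

end FreeProductAut

open FreeProductAut in
/-- For `n ≥ 2`, the free product `G ∗ G` embeds in `Aut_G(G ∗ F_n)`: the
homomorphism induced by sending `g` in the first free factor to the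
`G`-automorphism `α_g` fixing `x_2, …, x_n` with `x_1 ↦ x_1 · inl(g)`, and `g` in
the second free factor to the `G`-automorphism `β_g` fixing `x_2, …, x_n` with
`x_1 ↦ x_1 · (x_2⁻¹ · inl(g) · x_2)`, is injective. -/
theorem free_product_embedding (G : Type*) [Group G] (n : ℕ) (hn : 2 ≤ n) :
    have h0 : 0 < n := by omega
    have h1 : 1 < n := by omega
    ∃ f : Monoid.Coprod G G →* gAut G n, Function.Injective f ∧
      (∀ g : G,
        ((f (Monoid.Coprod.inl g) : MulAut (Monoid.Coprod G (FreeGroup (Fin n))))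
            (xgen G n ⟨0, h0⟩) = xgen G n ⟨0, h0⟩ * Monoid.Coprod.inl g) ∧
        ∀ i : Fin n, i ≠ ⟨0, h0⟩ →
          (f (Monoid.Coprod.inl g) : MulAut (Monoid.Coprod G (FreeGroup (Fin n))))
            (xgen G n i) = xgen G n i) ∧
      (∀ g : G,
        ((f (Monoid.Coprod.inr g) : MulAut (Monoid.Coprod G (FreeGroup (Fin n))))
            (xgen G n ⟨0, h0⟩) =
          xgen G n ⟨0, h0⟩ *
            ((xgen G n ⟨1, h1⟩)⁻¹ * Monoid.Coprod.inl g * xgen G n ⟨1, h1⟩)) ∧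
        ∀ i : Fin n, i ≠ ⟨0, h0⟩ →
          (f (Monoid.Coprod.inr g) : MulAut (Monoid.Coprod G (FreeGroup (Fin n))))
            (xgen G n i) = xgen G n i) := by
  intro h0 h1
  have hne : (⟨1, h1⟩ : Fin n) ≠ ⟨0, h0⟩ := by simp [Fin.ext_iff]
  let F : G ∗ G →* MulAut (G ∗ FreeGroup (Fin n)) :=
    transvectionHom _ (coprodConj _) fun _ _ ↦ transvection_coprodConj hne _ _
  refine ⟨F.codRestrict (gAut G n) fun _ ↦ transvectionHom_apply_inl _ _ _ _,
    (MonoidHom.injective_codRestrict _ _ _).2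
      (transvectionHom_injective _ _ _ (coprodConj_injective _)),
    fun g ↦ ⟨?_, fun i hi ↦ ?_⟩, fun g ↦ ⟨?_, fun i hi ↦ ?_⟩⟩
  · exact (transvectionHom_apply_of_self _ _ _ _).trans (congrArg _ (coprodConj_inl _ _))
  · exact transvectionHom_apply_of_of_ne _ _ _ hi _
  · exact (transvectionHom_apply_of_self _ _ _ _).trans (congrArg _ (coprodConj_inr _ _))
  · exact transvectionHom_apply_of_of_ne _ _ _ hi _
end

section
/- Let G be a nontrivial group with trivial center and let n ≥ 1. If w ∈ G ∗ F_n is such that the inner automorphism of G ∗ F_n given by conjugation by w fixes inl(G) pointwise (i.e., conjugation by w is a G-automorphism), then w = 1; equivalently, the centralizer of inl(G) in G ∗ F_n is trivial, so the subgroup of Aut(G ∗ F_n) generated by the inner automorphisms and Aut_G(G ∗ F_n) is the (internal) semidirect product Inn(G ∗ F_n) ⋊ Aut_G(G ∗ F_n). -/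
open Subgroup

theorem exists_ne_one_and_ne_of_center_eq_bot {G : Type*} [Group G] [Nontrivial G]
    (hz : center G = ⊥) (c : G) : ∃ g : G, g ≠ 1 ∧ g ≠ c := by
  by_contra! h
  have hcomm (a b : G) : a * b = b * a := by
    rcases eq_or_ne a 1 with rfl | ha; · simp
    rcases eq_or_ne b 1 with rfl | hb; · simp
    rw [h a ha, h b hb]
  obtain ⟨x, hx⟩ := exists_ne (1 : G)
  exact hx (mem_bot.1 (hz ▸ mem_center_iff.2 fun g => hcomm g x))

theorem Subgroup.center_eq_bot_of_mulEquiv {G K : Type*} [Group G] [Group K] (e : G ≃* K)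
    (hz : center G = ⊥) : center K = ⊥ := by
  refine (eq_bot_iff_forall _).2 fun x hx => e.symm.injective ?_
  rw [map_one, ← mem_bot, ← hz]
  exact (centerCongr e.symm ⟨x, hx⟩).2

namespace Monoid.CoprodI

variable {ι : Type*} {G : ι → Type*} [∀ i, Group (G i)]

namespace NeWord

def mulLast {i j : ι} (w : NeWord G i j) (x : G j) (hx : w.last * x ≠ 1) : NeWord G i j :=
  (w.inv.mulHead x⁻¹ (by rwa [inv_head, ← mul_inv_rev, inv_ne_one])).inv

@[simp]
theorem mulLast_prod {i j : ι} (w : NeWord G i j) (x : G j) (hx : w.last * x ≠ 1) :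
    (w.mulLast x hx).prod = w.prod * of x := by
  simp [mulLast]

theorem fstIdx_toWord {i j : ι} (w : NeWord G i j) : w.toWord.fstIdx = some i := by
  simp [Word.fstIdx, toWord, toList_head?]

end NeWord

section DecidableEq

variable [DecidableEq ι] [∀ i, DecidableEq (G i)]

@[simp]
theorem Word.equiv_prod (w : Word G) : Word.equiv w.prod = w :=
  Word.equiv.apply_symm_apply w

theorem Word.fstIdx_equiv_of_mul_prod {i : ι} (w : Word G) (hw : w.fstIdx ≠ some i) {g : G i}
    (hg : g ≠ 1) : (Word.equiv (of g * w.prod)).fstIdx = some i := by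
  rw [← Word.prod_cons i g w hg hw, Word.equiv_prod, Word.fstIdx_cons]

theorem NeWord.fstIdx_equiv_prod {i j : ι} (w : NeWord G i j) :
    (Word.equiv w.prod).fstIdx = some i := by
  rw [prod, Word.equiv_prod, fstIdx_toWord]

theorem NeWord.exists_ne_one_fstIdx_equiv_prod_mul_of {i j l : ι} (w : NeWord G j l)
    (hj : j ≠ i) (hG : ∀ c : G i, ∃ x, x ≠ 1 ∧ x ≠ c) :
    ∃ x : G i, x ≠ 1 ∧ (Word.equiv (w.prod * of x)).fstIdx = some j := by
  by_cases hl : l = i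
  · subst hl
    obtain ⟨x, hx1, hx⟩ := hG w.last⁻¹
    refine ⟨x, hx1, ?_⟩
    rw [← mulLast_prod w x (by rwa [Ne, mul_eq_one_iff_eq_inv', ← ne_eq])]
    exact fstIdx_equiv_prod _
  · obtain ⟨x, hx1, -⟩ := hG 1
    refine ⟨x, hx1, ?_⟩
    rw [← prod_singleton x hx1, ← append_prod (hne := hl)]
    exact fstIdx_equiv_prod _

end DecidableEq

theorem centralizer_range_of_eq_bot {i : ι} [Nontrivial (G i)] (hz : center (G i) = ⊥) :
    centralizer (Set.range (of : G i →* CoprodI G)) = ⊥ := by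
  classical
  refine (eq_bot_iff_forall _).2 fun w hw => ?_
  have hcomm (g : G i) : of g * w = w * of g := mem_centralizer_iff.1 hw _ ⟨g, rfl⟩
  set p := Word.equivPair i (Word.equiv w)
  have hw : w = of p.head * p.tail.prod := by
    rw [← Word.prod_rcons, ← Word.equivPair_symm, Equiv.symm_apply_apply]
    exact (Word.equiv.symm_apply_apply w).symm
  have htwist (g : G i) : of (p.head⁻¹ * g * p.head) * p.tail.prod = p.tail.prod * of g := by
    have := hcomm g
    rw [hw] at this
    rw [map_mul, map_mul, map_inv, mul_assoc, mul_assoc, this, mul_assoc, inv_mul_cancel_left]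
  by_cases ht : p.tail = Word.empty
  · rw [ht, Word.prod_empty, mul_one] at hw
    have hhead : p.head ∈ center (G i) := mem_center_iff.2 fun g =>
      of_injective i (by simpa [hw] using hcomm g)
    rw [hz, mem_bot] at hhead
    rw [hw, hhead, map_one]
  · obtain ⟨j, l, W, hW⟩ := NeWord.of_word _ ht
    have hj : j ≠ i := fun h => p.fstIdx_ne (by rw [← hW, NeWord.fstIdx_toWord, h])
    obtain ⟨g, hg, hfst⟩ :=
      W.exists_ne_one_fstIdx_equiv_prod_mul_of hj (exists_ne_one_and_ne_of_center_eq_bot hz)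
    have := p.tail.fstIdx_equiv_of_mul_prod p.fstIdx_ne (g := p.head⁻¹ * g * p.head)
      (by simpa [mul_assoc, inv_mul_eq_one] using hg)
    rw [htwist, ← hW, ← NeWord.prod, hfst] at this
    exact absurd (Option.some_injective _ this) hj

end Monoid.CoprodI

namespace Monoid.Coprod

universe u v

-- Lifted to a common universe, so that `G ∗ H` embeds into `CoprodI (summand G H)`.
abbrev summand (G : Type u) (H : Type v) (b : Bool) : Type max u v :=
  cond b (ULift.{v} G) (ULift.{u} H)

variable {G : Type u} {H : Type v} [Group G] [Group H]

instance (b : Bool) : Group (summand G H b) := by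
  cases b <;> exact ULift.group

def toCoprodI : G ∗ H →* CoprodI (summand G H) :=
  lift (CoprodI.of (i := true) |>.comp MulEquiv.ulift.symm.toMonoidHom)
    (CoprodI.of (i := false) |>.comp MulEquiv.ulift.symm.toMonoidHom)

def ofCoprodI : CoprodI (summand G H) →* G ∗ H :=
  CoprodI.lift fun
    | true => inl.comp MulEquiv.ulift.toMonoidHom
    | false => inr.comp MulEquiv.ulift.toMonoidHom

theorem ofCoprodI_comp_toCoprodI : (ofCoprodI (G := G) (H := H)).comp toCoprodI = .id _ := by
  apply hom_ext <;> ext <;> simp [toCoprodI, ofCoprodI]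

theorem toCoprodI_injective : Function.Injective (toCoprodI (G := G) (H := H)) :=
  Function.LeftInverse.injective (g := ofCoprodI) (DFunLike.congr_fun ofCoprodI_comp_toCoprodI)

theorem centralizer_range_inl_eq_bot [Nontrivial G] (hz : center G = ⊥) :
    centralizer (Set.range (inl : G →* G ∗ H)) = ⊥ := by
  refine (eq_bot_iff_forall _).2 fun w hw => toCoprodI_injective ?_
  have hw' : toCoprodI w ∈ centralizer (Set.range (CoprodI.of : summand G H true →* _)) := by
    rw [mem_centralizer_iff]
    rintro _ ⟨g, rfl⟩
    have := congrArg toCoprodI (mem_centralizer_iff.1 hw (inl g.down) ⟨g.down, rfl⟩)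
    rwa [map_mul, map_mul] at this
  have : Nontrivial (summand G H true) := ULift.nontrivial
  rw [CoprodI.centralizer_range_of_eq_bot (center_eq_bot_of_mulEquiv MulEquiv.ulift.symm hz),
    mem_bot] at hw'
  rw [hw', map_one]

end Monoid.Coprod

theorem conj_gAut_trivial_general (G : Type*) [Group G] [Nontrivial G]
    (hz : Subgroup.center G = ⊥) (n : ℕ) :
    (∀ w : Monoid.Coprod G (FreeGroup (Fin n)),
        MulAut.conj w ∈ gAut G n → w = 1) ∧
    Subgroup.centralizer
      (Set.range (Monoid.Coprod.inl : G →* Monoid.Coprod G (FreeGroup (Fin n)))) = ⊥ ∧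
    (MulAut.conj :
        Monoid.Coprod G (FreeGroup (Fin n)) →*
          MulAut (Monoid.Coprod G (FreeGroup (Fin n)))).range ⊓ gAut G n = ⊥ := by
  have hcentralizer := Monoid.Coprod.centralizer_range_inl_eq_bot (H := FreeGroup (Fin n)) hz
  have hconj (w) (hw : MulAut.conj w ∈ gAut G n) : w = 1 := by
    rw [← mem_bot, ← hcentralizer, mem_centralizer_iff]
    rintro _ ⟨g, rfl⟩
    exact (mul_inv_eq_iff_eq_mul.1 (hw g)).symm
  refine ⟨hconj, hcentralizer, (eq_bot_iff_forall _).2 ?_⟩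
  rintro _ ⟨⟨w, rfl⟩, hw⟩
  rw [hconj w hw, map_one]

/-- For `G` a nontrivial group with trivial center and `n ≥ 1`: if conjugation by
`w ∈ G ∗ F_n` fixes `inl(G)` pointwise (i.e. is a `G`-automorphism), then `w = 1`;
equivalently, the centralizer of `inl(G)` in `G ∗ F_n` is trivial, so the inner
automorphisms meet `Aut_G(G ∗ F_n)` trivially and the subgroup of
`Aut(G ∗ F_n)` they generate is the internal semidirect product
`Inn(G ∗ F_n) ⋊ Aut_G(G ∗ F_n)`. -/
theorem conj_gAut_trivial (G : Type*) [Group G] [Nontrivial G]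
    (hz : Subgroup.center G = ⊥) (n : ℕ) (hn : 1 ≤ n) :
    (∀ w : Monoid.Coprod G (FreeGroup (Fin n)),
        MulAut.conj w ∈ gAut G n → w = 1) ∧
    Subgroup.centralizer
      (Set.range (Monoid.Coprod.inl : G →* Monoid.Coprod G (FreeGroup (Fin n)))) = ⊥ ∧
    (MulAut.conj :
        Monoid.Coprod G (FreeGroup (Fin n)) →*
          MulAut (Monoid.Coprod G (FreeGroup (Fin n)))).range ⊓ gAut G n = ⊥ :=
  conj_gAut_trivial_general G hz n
end
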